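/- Fix a constraint value C ∈ (0, 1/2). Let f be a bounded measurable strategy supported in [0, 1] with mca(f) ≤ C such that ∫_{(2C, 1]} f(x) dx > 0, and let h be the indicator function of the interval [0, 2C]. Then h is a strategy with mca(h) = C, and wp(f; h) < 0. -/

import Mathlib

open MeasureTheory Set

/-- Mean competitive ability of a function supported in `[0, ∞)`:
`mca f = (∫₀^∞ t f(t) dt) / (∫₀^∞ f(t) dt)`. -/
noncomputable def mca (f : ℝ → ℝ) : ℝ :=
  (∫ t in Ioi (0:ℝ), t * f t) / (∫ t in Ioi (0:ℝ), f t)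

/-- Payoff of `f` against `g`:
`wp f g = ∫₀^∞ f(x) (∫₀ˣ g(t) dt − ∫ₓ^∞ g(t) dt) dx`. -/
noncomputable def wp (f g : ℝ → ℝ) : ℝ :=
  ∫ x in Ioi (0:ℝ), f x * ((∫ t in Ioc (0:ℝ) x, g t) - ∫ t in Ioi x, g t)

/-- A bounded measurable strategy: measurable, bounded, nonnegative, compactly
supported in `[0, ∞)`, and not almost everywhere zero. -/
def IsStrategy (f : ℝ → ℝ) : Prop :=
  Measurable f ∧ (∃ Cb : ℝ, ∀ x, f x ≤ Cb) ∧ (∀ x, 0 ≤ f x) ∧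
  (∃ R : ℝ, Function.support f ⊆ Icc 0 R) ∧ ¬ f =ᵐ[volume] (0 : ℝ → ℝ)

/-! For `x > 0` the payoff integrand of `h = 1_[0, 2C]` against `f` is
`f x * (2 min(x, 2C) - 2C) = 2 f x (x - C) - 2 f x (x - min(x, 2C))`.
The first part integrates to `∫ t f - C ∫ f ≤ 0`, which is `mca f ≤ C`; the second is
nonnegative and strictly positive where `f > 0` beyond `2C`, a set of positive measure. -/

namespace IsStrategy

variable {f : ℝ → ℝ}

theorem nonneg (hf : IsStrategy f) (x : ℝ) : 0 ≤ f x := hf.2.2.1 x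

theorem integrable_mul (hf : IsStrategy f) {g : ℝ → ℝ} (hg : Continuous g) :
    Integrable (fun x => f x * g x) := by
  obtain ⟨hfm, ⟨M, hM⟩, hf0, ⟨R, hR⟩, -⟩ := hf
  rw [← integrableOn_iff_integrable_of_support_subset
    ((Function.support_mul_subset_left _ _).trans hR)]
  refine IntegrableOn.mul_continuousOn ?_ hg.continuousOn isCompact_Icc
  refine Measure.integrableOn_of_bounded (M := M) measure_Icc_lt_top.ne
    hfm.aestronglyMeasurable (ae_of_all _ fun x => ?_)
  rw [Real.norm_of_nonneg (hf0 x)]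
  exact hM x

theorem integrable (hf : IsStrategy f) : Integrable f := by
  simpa using hf.integrable_mul continuous_const (g := fun _ => 1)

theorem setIntegral_mono_set (hf : IsStrategy f) {s t : Set ℝ} (hst : s ⊆ t) :
    ∫ x in s, f x ≤ ∫ x in t, f x :=
  MeasureTheory.setIntegral_mono_set hf.integrable.integrableOn (ae_of_all _ hf.nonneg)
    hst.eventuallyLE

theorem integral_mul_sub_nonpos_of_mca_le (hf : IsStrategy f) {m : ℝ}
    (hmass : 0 < ∫ x in Ioi 0, f x) (hmca : mca f ≤ m) :
    ∫ x in Ioi 0, f x * (x - m) ≤ 0 := by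
  have hmoment : Integrable (fun x => x * f x) := by
    simpa only [mul_comm] using hf.integrable_mul (g := fun x => x) continuous_id
  have hsplit :
      ∫ x in Ioi 0, f x * (x - m) = (∫ x in Ioi 0, x * f x) - m * ∫ x in Ioi 0, f x := by
    rw [← integral_const_mul, ← integral_sub hmoment.integrableOn
      (hf.integrable.integrableOn.const_mul m)]
    congr 1 with x
    ring
  rw [mca, div_le_iff₀ hmass] at hmca
  linarith

theorem integral_mul_sub_min_pos (hf : IsStrategy f) {c : ℝ} (hc : 0 ≤ c)
    (hpos : 0 < ∫ x in Ioi c, f x) : 0 < ∫ x in Ioi 0, f x * (x - min x c) := by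
  have hnonneg : ∀ x, 0 ≤ f x * (x - min x c) :=
    fun x => mul_nonneg (hf.nonneg x) (sub_nonneg.2 (min_le_left _ _))
  rw [setIntegral_pos_iff_support_of_nonneg_ae (ae_of_all _ hnonneg)
    (hf.integrable_mul (by fun_prop)).integrableOn]
  rw [setIntegral_pos_iff_support_of_nonneg_ae (ae_of_all _ hf.nonneg)
    hf.integrable.integrableOn] at hpos
  refine hpos.trans_le (measure_mono ?_)
  rintro x ⟨hfx, hcx : c < x⟩
  refine ⟨mul_ne_zero hfx ?_, hc.trans_lt hcx⟩
  rw [min_eq_right hcx.le]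
  exact sub_ne_zero.2 hcx.ne'

end IsStrategy

section Indicator

variable {c : ℝ}

theorem setIntegral_indicator_Icc_one (s : Set ℝ) :
    ∫ t in s, (Icc 0 c).indicator 1 t = volume.real (s ∩ Icc 0 c) := by
  rw [integral_indicator_one measurableSet_Icc, measureReal_restrict_apply measurableSet_Icc,
    inter_comm]

theorem integral_Ioc_indicator_Icc (hc : 0 ≤ c) {x : ℝ} (hx : 0 ≤ x) :
    ∫ t in Ioc 0 x, (Icc 0 c).indicator 1 t = min x c := by
  have hset : Ioc 0 x ∩ Icc 0 c = Ioc 0 (min x c) := by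
    ext t; simp only [mem_inter_iff, mem_Ioc, mem_Icc, le_min_iff]; grind
  rw [setIntegral_indicator_Icc_one, hset, Real.volume_real_Ioc, sub_zero,
    max_eq_left (le_min hx hc)]

theorem integral_Ioi_indicator_Icc {x : ℝ} (hx : 0 ≤ x) :
    ∫ t in Ioi x, (Icc 0 c).indicator 1 t = max (c - x) 0 := by
  have hset : Ioi x ∩ Icc 0 c = Ioc x c := by
    ext t; simp only [mem_inter_iff, mem_Ioi, mem_Ioc, mem_Icc]; grind
  rw [setIntegral_indicator_Icc_one, hset, Real.volume_real_Ioc]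

theorem wp_indicator_Icc (hc : 0 ≤ c) (f : ℝ → ℝ) :
    wp f ((Icc 0 c).indicator 1) = ∫ x in Ioi 0, f x * (2 * min x c - c) := by
  refine setIntegral_congr_fun measurableSet_Ioi fun x (hx : 0 < x) => ?_
  rw [integral_Ioc_indicator_Icc hc hx.le, integral_Ioi_indicator_Icc hx.le]
  congr 1
  rcases le_total x c with hxc | hcx
  · rw [min_eq_left hxc, max_eq_left (sub_nonneg.2 hxc)]; ring
  · rw [min_eq_right hcx, max_eq_right (sub_nonpos.2 hcx)]; ring

theorem isStrategy_indicator_Icc (hc : 0 < c) : IsStrategy ((Icc 0 c).indicator 1) := by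
  refine ⟨measurable_one.indicator measurableSet_Icc, ⟨1, fun x => ?_⟩,
    indicator_nonneg fun _ _ => zero_le_one, ⟨c, support_indicator_subset⟩, fun hzero => ?_⟩
  · exact indicator_le_self' (fun _ _ => zero_le_one) x
  · have := integral_congr_ae hzero
    rw [integral_indicator_one measurableSet_Icc, Real.volume_real_Icc, sub_zero,
      max_eq_left hc.le, integral_zero'] at this
    exact hc.ne' this

theorem mca_indicator_Icc (hc : 0 < c) : mca ((Icc 0 c).indicator 1) = c / 2 := by
  have hset : Ioi 0 ∩ Icc 0 c = Ioc 0 c := by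
    ext t; simp only [mem_inter_iff, mem_Ioi, mem_Ioc, mem_Icc]; grind
  have hmass : ∫ t in Ioi 0, (Icc 0 c).indicator 1 t = c := by
    rw [setIntegral_indicator_Icc_one, hset, Real.volume_real_Ioc, sub_zero, max_eq_left hc.le]
  have hmoment : ∫ t in Ioi 0, t * (Icc 0 c).indicator 1 t = c ^ 2 / 2 := by
    simp only [← indicator_mul_right (Icc 0 c) (fun t => t) 1]
    rw [setIntegral_indicator measurableSet_Icc, hset, ← intervalIntegral.integral_of_le hc.le]
    simp
  rw [mca, hmass, hmoment]
  field_simp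

end Indicator

theorem wp_indicator_Icc_neg {f : ℝ → ℝ} {c : ℝ} (hf : IsStrategy f) (hc : 0 ≤ c)
    (hmca : mca f ≤ c / 2) (hpos : 0 < ∫ x in Ioi c, f x) :
    wp f ((Icc 0 c).indicator 1) < 0 := by
  have hmass : 0 < ∫ x in Ioi 0, f x :=
    hpos.trans_le (hf.setIntegral_mono_set (Ioi_subset_Ioi hc))
  have hmean := hf.integral_mul_sub_nonpos_of_mca_le hmass hmca
  have hgap := hf.integral_mul_sub_min_pos hc hpos
  have hsplit : wp f ((Icc 0 c).indicator 1) =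
      2 * (∫ x in Ioi 0, f x * (x - c / 2)) - 2 * ∫ x in Ioi 0, f x * (x - min x c) := by
    rw [wp_indicator_Icc hc, ← integral_const_mul, ← integral_const_mul,
      ← integral_sub ((hf.integrable_mul (by fun_prop)).integrableOn.const_mul 2)
        ((hf.integrable_mul (by fun_prop)).integrableOn.const_mul 2)]
    congr 1 with x
    ring
  linarith

theorem stmt13_general (C : ℝ) (hC : C ∈ Ioo (0:ℝ) (1/2)) (f : ℝ → ℝ) (hf : IsStrategy f)
    (hmca : mca f ≤ C)
    (hpos : 0 < ∫ x in Ioc (2*C) 1, f x)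
    (h : ℝ → ℝ) (hh : h = Set.indicator (Icc (0:ℝ) (2*C)) (fun _ => (1:ℝ))) :
    IsStrategy h ∧ mca h = C ∧ wp f h < 0 := by
  have hc : 0 < 2 * C := by linarith [hC.1]
  have hhalf : 2 * C / 2 = C := by ring
  subst hh
  refine ⟨isStrategy_indicator_Icc hc, (mca_indicator_Icc hc).trans hhalf, ?_⟩
  exact wp_indicator_Icc_neg hf hc.le (by rwa [hhalf])
    (hpos.trans_le (hf.setIntegral_mono_set Ioc_subset_Ioi_self))

theorem stmt13 (C : ℝ) (hC : C ∈ Ioo (0:ℝ) (1/2)) (f : ℝ → ℝ) (hf : IsStrategy f)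
    (hsupp : Function.support f ⊆ Icc (0:ℝ) 1) (hmca : mca f ≤ C)
    (hpos : 0 < ∫ x in Ioc (2*C) 1, f x)
    (h : ℝ → ℝ) (hh : h = Set.indicator (Icc (0:ℝ) (2*C)) (fun _ => (1:ℝ))) :
    IsStrategy h ∧ mca h = C ∧ wp f h < 0 :=
  stmt13_general C hC f hf hmca hpos h hh
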